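/- If G is a finite tree and e is an edge fixed (with orientation) by every automorphism of G, and G₁, G₂ are the two components of G with e removed, then Aut(G) is isomorphic to Aut(G₁) × Aut(G₂), where Aut(Gᵢ) denotes automorphisms of Gᵢ fixing the endpoint of e in Gᵢ. -/

import Mathlib

/-!
Deleting the bridge `{u, v}` splits the vertices into the side of `u` and the side of `v`.
An automorphism fixing `u` and `v` is an automorphism of the edge-deleted graph, so it preserves
both sides and restricts to each of them. Conversely, automorphisms of the two sides fixing `u`
and `v` glue to an automorphism of `G`, because `{u, v}` is the only edge between the sides.
In a tree every edge is a bridge, and by hypothesis every automorphism fixes `u` and `v`.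
-/

open SimpleGraph

/-- The connected component (as a vertex set) containing `u` after deleting the edge
`{u, v}` from `G`. -/
def sideOf {V : Type*} (G : SimpleGraph V) (u v : V) : Set V :=
  {x | (G.deleteEdges {s(u, v)}).Reachable u x}

theorem mem_sideOf {V : Type*} (G : SimpleGraph V) (u v : V) : u ∈ sideOf G u v :=
  Reachable.refl u

/-- The subgroup of automorphisms of a graph fixing a given vertex. -/
def vertexStabilizer {W : Type*} (G : SimpleGraph W) (x : W) : Subgroup (G ≃g G) where
  carrier := {φ | φ x = x}
  one_mem' := rfl
  mul_mem' := by
    intro a b ha hb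
    simp only [Set.mem_setOf_eq] at *
    show a (b x) = x
    rw [hb, ha]
  inv_mem' := by
    intro a ha
    simp only [Set.mem_setOf_eq] at *
    show a.symm x = x
    conv_lhs => rw [← ha]
    exact a.symm_apply_apply x

theorem Set.mem_or_mem_of_isCompl {α : Type*} {S T : Set α} (hST : IsCompl S T) (x : α) :
    x ∈ S ∨ x ∈ T := by
  rw [← hST.compl_eq]
  exact em _

namespace Equiv.Perm

variable {α : Type*} {S T : Set α}

open Classical in
noncomputable def ofIsCompl (hST : IsCompl S T) (σ : Perm S) (τ : Perm T) : Perm α :=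
  σ.subtypeCongr ((Equiv.setCongr hST.compl_eq).symm.permCongr τ)

theorem ofIsCompl_apply_of_mem_left (hST : IsCompl S T) (σ : Perm S) (τ : Perm T) {x : α}
    (hx : x ∈ S) : ofIsCompl hST σ τ x = σ ⟨x, hx⟩ := by
  classical
  exact subtypeCongr.left_apply _ _ hx

theorem ofIsCompl_apply_of_mem_right (hST : IsCompl S T) (σ : Perm S) (τ : Perm T) {x : α}
    (hx : x ∈ T) : ofIsCompl hST σ τ x = τ ⟨x, hx⟩ := by
  classical
  exact subtypeCongr.right_apply _ _ (hST.disjoint.notMem_of_mem_right hx)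

end Equiv.Perm

namespace SimpleGraph

variable {V V' : Type*} {G : SimpleGraph V} {G' : SimpleGraph V'} {u v : V}

@[simp]
theorem mem_vertexStabilizer {φ : G ≃g G} : φ ∈ vertexStabilizer G u ↔ φ u = u := Iff.rfl

theorem coe_apply_eq_iff_of_mem_vertexStabilizer {s : Set V} {ψ : G.induce s ≃g G.induce s}
    {hu : u ∈ s} (h : ψ ∈ vertexStabilizer (G.induce s) ⟨u, hu⟩) {x : s} :
    (ψ x : V) = u ↔ (x : V) = u := by
  simpa [mem_vertexStabilizer.mp h, Subtype.ext_iff] using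
    ψ.injective.eq_iff (a := x) (b := ⟨u, hu⟩)

theorem mem_sideOf_of_adj {a b : V} (ha : a ∈ sideOf G u v) (hab : G.Adj a b)
    (he : s(a, b) ≠ s(u, v)) : b ∈ sideOf G u v :=
  ha.trans (deleteEdges_adj.mpr ⟨hab, he⟩).reachable

theorem mem_sideOf_or_mem_sideOf_of_adj {a b : V} (ha : a ∈ sideOf G u v) (hab : G.Adj a b) :
    b ∈ sideOf G u v ∨ b ∈ sideOf G v u := by
  by_cases he : s(a, b) = s(u, v)
  · rcases Sym2.eq_iff.mp he with ⟨-, rfl⟩ | ⟨-, rfl⟩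
    · exact .inr (mem_sideOf G b u)
    · exact .inl (mem_sideOf G b v)
  · exact .inl (mem_sideOf_of_adj ha hab he)

theorem sideOf_union_sideOf (hG : G.Preconnected) : sideOf G u v ∪ sideOf G v u = Set.univ := by
  refine Set.eq_univ_of_forall fun x => ?_
  induction (reachable_iff_reflTransGen u x).mp (hG u x) with
  | refl => exact .inl (mem_sideOf G u v)
  | tail _ hab ih =>
    rcases ih with ha | ha
    · exact mem_sideOf_or_mem_sideOf_of_adj ha hab
    · exact (mem_sideOf_or_mem_sideOf_of_adj ha hab).symm

theorem IsBridge.disjoint_sideOf (hb : G.IsBridge s(u, v)) :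
    Disjoint (sideOf G u v) (sideOf G v u) := by
  refine Set.disjoint_left.mpr fun x hxu hxv => isBridge_iff.mp hb (hxu.trans ?_)
  rw [sideOf, Sym2.eq_swap] at hxv
  exact hxv.symm

theorem IsBridge.isCompl_sideOf (hb : G.IsBridge s(u, v)) (hG : G.Preconnected) :
    IsCompl (sideOf G u v) (sideOf G v u) :=
  ⟨hb.disjoint_sideOf, codisjoint_iff.mpr (sideOf_union_sideOf hG)⟩

theorem IsBridge.adj_iff_of_mem_sideOf (hb : G.IsBridge s(u, v)) (huv : G.Adj u v) {a b : V}
    (ha : a ∈ sideOf G u v) (hb' : b ∈ sideOf G v u) : G.Adj a b ↔ a = u ∧ b = v := by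
  refine ⟨fun hab => ?_, fun ⟨hau, hbv⟩ => hau ▸ hbv ▸ huv⟩
  by_cases he : s(a, b) = s(u, v)
  · rcases Sym2.eq_iff.mp he with h | ⟨rfl, -⟩
    · exact h
    · exact (hb.disjoint_sideOf.notMem_of_mem_right (mem_sideOf G a u) ha).elim
  · exact (hb.disjoint_sideOf.notMem_of_mem_left (mem_sideOf_of_adj ha hab he) hb').elim

def Iso.deleteEdge (φ : G ≃g G') (u v : V) :
    G.deleteEdges {s(u, v)} ≃g G'.deleteEdges {s(φ u, φ v)} where
  toEquiv := φ.toEquiv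
  map_rel_iff' {a b} := by
    have : s(φ a, φ b) = s(φ u, φ v) ↔ s(a, b) = s(u, v) := by
      simp only [← Sym2.map_mk]
      exact (Sym2.map.injective φ.injective).eq_iff
    simp [φ.map_adj_iff, this]

theorem Iso.map_mem_sideOf_iff (φ : G ≃g G') {x : V} :
    φ x ∈ sideOf G' (φ u) (φ v) ↔ x ∈ sideOf G u v :=
  (φ.deleteEdge u v).reachable_iff

def Iso.restrict (φ : G ≃g G') {s : Set V} {t : Set V'} (h : ∀ x, x ∈ s ↔ φ x ∈ t) :
    G.induce s ≃g G'.induce t :=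
  { φ.toEquiv.subtypeEquiv h with map_rel_iff' := φ.map_adj_iff }

def Iso.restrictSideOf (φ : G ≃g G) (hu : φ u = u) (hv : φ v = v) :
    G.induce (sideOf G u v) ≃g G.induce (sideOf G u v) :=
  φ.restrict fun x => by rw [← φ.map_mem_sideOf_iff, hu, hv]

@[simp]
theorem Iso.coe_restrictSideOf_apply (φ : G ≃g G) (hu : φ u = u) (hv : φ v = v)
    (x : sideOf G u v) : (φ.restrictSideOf hu hv x : V) = φ x :=
  rfl

section Glue

variable {S T : Set V} (hST : IsCompl S T) {hu : u ∈ S} {hv : v ∈ T}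
  (hcross : ∀ a ∈ S, ∀ b ∈ T, G.Adj a b ↔ a = u ∧ b = v)
  (ψ₁ : G.induce S ≃g G.induce S) (ψ₂ : G.induce T ≃g G.induce T)

noncomputable def Iso.glue (h₁ : ψ₁ ∈ vertexStabilizer (G.induce S) ⟨u, hu⟩)
    (h₂ : ψ₂ ∈ vertexStabilizer (G.induce T) ⟨v, hv⟩) : G ≃g G where
  toEquiv := Equiv.Perm.ofIsCompl hST ψ₁.toEquiv ψ₂.toEquiv
  map_rel_iff' {a b} := by
    change G.Adj (Equiv.Perm.ofIsCompl hST _ _ a) (Equiv.Perm.ofIsCompl hST _ _ b) ↔ G.Adj a b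
    have cross {a b : V} (ha : a ∈ S) (hb : b ∈ T) :
        G.Adj (ψ₁ ⟨a, ha⟩) (ψ₂ ⟨b, hb⟩) ↔ G.Adj a b := by
      rw [hcross _ (ψ₁ _).2 _ (ψ₂ _).2, hcross _ ha _ hb,
        coe_apply_eq_iff_of_mem_vertexStabilizer h₁,
        coe_apply_eq_iff_of_mem_vertexStabilizer h₂]
    rcases Set.mem_or_mem_of_isCompl hST a with ha | ha <;>
      rcases Set.mem_or_mem_of_isCompl hST b with hb | hb <;>
      simp only [RelIso.coe_fn_toEquiv, Equiv.Perm.ofIsCompl_apply_of_mem_left,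
        Equiv.Perm.ofIsCompl_apply_of_mem_right, ha, hb]
    · exact ψ₁.map_adj_iff
    · exact cross ha hb
    · rw [adj_comm, cross hb ha, adj_comm]
    · exact ψ₂.map_adj_iff

variable {hST hcross ψ₁ ψ₂} {h₁ : ψ₁ ∈ vertexStabilizer (G.induce S) ⟨u, hu⟩}
  {h₂ : ψ₂ ∈ vertexStabilizer (G.induce T) ⟨v, hv⟩}

theorem Iso.glue_apply_of_mem_left {x : V} (hx : x ∈ S) :
    Iso.glue hST hcross ψ₁ ψ₂ h₁ h₂ x = ψ₁ ⟨x, hx⟩ :=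
  Equiv.Perm.ofIsCompl_apply_of_mem_left hST _ _ hx

theorem Iso.glue_apply_of_mem_right {x : V} (hx : x ∈ T) :
    Iso.glue hST hcross ψ₁ ψ₂ h₁ h₂ x = ψ₂ ⟨x, hx⟩ :=
  Equiv.Perm.ofIsCompl_apply_of_mem_right hST _ _ hx

end Glue

noncomputable def IsBridge.stabilizerEquivProd (hb : G.IsBridge s(u, v)) (hG : G.Preconnected)
    (huv : G.Adj u v) :
    ↥(vertexStabilizer G u ⊓ vertexStabilizer G v) ≃*
      vertexStabilizer (G.induce (sideOf G u v)) ⟨u, mem_sideOf G u v⟩ ×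
        vertexStabilizer (G.induce (sideOf G v u)) ⟨v, mem_sideOf G v u⟩ where
  toFun φ :=
    have hu : φ.1 u = u := mem_vertexStabilizer.mp (Subgroup.mem_inf.mp φ.2).1
    have hv : φ.1 v = v := mem_vertexStabilizer.mp (Subgroup.mem_inf.mp φ.2).2
    (⟨φ.1.restrictSideOf hu hv, mem_vertexStabilizer.mpr (Subtype.ext hu)⟩,
      ⟨φ.1.restrictSideOf hv hu, mem_vertexStabilizer.mpr (Subtype.ext hv)⟩)
  invFun ψ :=
    ⟨Iso.glue (hb.isCompl_sideOf hG) (fun _ ha _ hb' => hb.adj_iff_of_mem_sideOf huv ha hb')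
        ψ.1.1 ψ.2.1 ψ.1.2 ψ.2.2,
      (Iso.glue_apply_of_mem_left (mem_sideOf G u v)).trans
        (congrArg Subtype.val (mem_vertexStabilizer.mp ψ.1.2)),
      (Iso.glue_apply_of_mem_right (mem_sideOf G v u)).trans
        (congrArg Subtype.val (mem_vertexStabilizer.mp ψ.2.2))⟩
  left_inv φ := by
    refine Subtype.ext (RelIso.ext fun x => ?_)
    dsimp only
    rcases Set.mem_or_mem_of_isCompl (hb.isCompl_sideOf hG) x with hx | hx
    · exact Iso.glue_apply_of_mem_left hx
    · exact Iso.glue_apply_of_mem_right hx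
  right_inv ψ := by
    refine Prod.ext (Subtype.ext (RelIso.ext fun x => Subtype.ext ?_))
      (Subtype.ext (RelIso.ext fun x => Subtype.ext ?_)) <;>
      dsimp only [Iso.coe_restrictSideOf_apply]
    · rw [Iso.glue_apply_of_mem_left x.2]
    · rw [Iso.glue_apply_of_mem_right x.2]
  map_mul' _ _ := rfl

end SimpleGraph

theorem product_decomposition_general {V : Type*} (G : SimpleGraph V)
    (hG : G.IsTree) (u v : V) (huv : G.Adj u v)
    (hu : ∀ φ : G ≃g G, φ u = u) (hv : ∀ φ : G ≃g G, φ v = v) :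
    Nonempty ((G ≃g G) ≃*
      (vertexStabilizer (G.induce (sideOf G u v)) ⟨u, mem_sideOf G u v⟩ ×
       vertexStabilizer (G.induce (sideOf G v u)) ⟨v, mem_sideOf G v u⟩)) := by
  have hb : G.IsBridge s(u, v) := isAcyclic_iff_forall_adj_isBridge.mp hG.isAcyclic huv
  have htop : vertexStabilizer G u ⊓ vertexStabilizer G v = ⊤ :=
    eq_top_iff.mpr fun φ _ => ⟨hu φ, hv φ⟩
  exact ⟨Subgroup.topEquiv.symm.trans <| (MulEquiv.subgroupCongr htop).symm.trans <|
    hb.stabilizerEquivProd hG.connected.preconnected huv⟩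

/-- Product Decomposition: if `G` is a finite tree and `e = {u,v}` is an edge fixed
pointwise by every automorphism, and `G₁ ∋ u`, `G₂ ∋ v` are the two components of
`G` with `e` removed, then `Aut(G) ≅ Aut(G₁, u) × Aut(G₂, v)`, where `Aut(Gᵢ, x)` is
the group of automorphisms of the induced graph `Gᵢ` fixing `x`. -/
theorem product_decomposition {V : Type*} [Fintype V] (G : SimpleGraph V)
    (hG : G.IsTree) (u v : V) (huv : G.Adj u v)
    (hu : ∀ φ : G ≃g G, φ u = u) (hv : ∀ φ : G ≃g G, φ v = v) :
    Nonempty ((G ≃g G) ≃*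
      (vertexStabilizer (G.induce (sideOf G u v)) ⟨u, mem_sideOf G u v⟩ ×
       vertexStabilizer (G.induce (sideOf G v u)) ⟨v, mem_sideOf G v u⟩)) :=
  product_decomposition_general G hG u v huv hu hv
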